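/- arXiv:math/0506154 — 4 statements merged into one kernel-verified Lean document; each statement's English description precedes it below -/
import Mathlib

section
/- Let ℓ ≥ 2 and let q be a primitive ℓ-th root of unity. Suppose y, z are elements of a ℂ-algebra with zy = qyz and y^i z^{ℓ-i} = 0 for all 0 ≤ i ≤ ℓ. Then the truncated q-exponential satisfies exp_q(y+z) = exp_q(y) exp_q(z), where exp_q(w) = \sum_{i=0}^{ℓ-1} w^i/(i)_q!. -/
/-- The q-integer `(k)_q = 1 + q + ⋯ + q^(k-1)`. -/
noncomputable def qInt (q : ℂ) (k : ℕ) : ℂ := ∑ j ∈ Finset.range k, q ^ j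

/-- The q-factorial `(i)_q! = (i)_q (i-1)_q ⋯ (1)_q`. -/
noncomputable def qFact (q : ℂ) (i : ℕ) : ℂ := ∏ j ∈ Finset.range i, qInt q (j + 1)

/-- The truncated q-exponential `exp_q(w) = ∑_{i=0}^{ℓ-1} w^i/(i)_q!`
(for `q` a primitive ℓ-th root of unity). -/
noncomputable def qExp {A : Type*} [Ring A] [Algebra ℂ A] (q : ℂ) (ℓ : ℕ) (w : A) : A :=
  ∑ i ∈ Finset.range ℓ, (qFact q i)⁻¹ • w ^ i


/-! Write `[n]!` for `qFact q n`. The q-binomial theorem for `z y = q y z` gives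
`(y + z)^n / [n]! = ∑_{i+j=n} y^i z^j / ([i]! [j]!)`, valid for `n < ℓ` because there the
q-factorials are nonzero. Summing over `n < ℓ` gives the terms of `exp_q(y) exp_q(z)` with
`i + j < ℓ`; the remaining terms vanish since `y^i z^j = 0` once `i + j ≥ ℓ`. -/

open Finset

lemma qInt_add (q : ℂ) (a b : ℕ) : qInt q (a + b) = qInt q a + q ^ a * qInt q b := by
  simp [qInt, sum_range_add, mul_sum, pow_add]

lemma qFact_zero (q : ℂ) : qFact q 0 = 1 := prod_range_zero _

lemma qFact_succ (q : ℂ) (n : ℕ) : qFact q (n + 1) = qFact q n * qInt q (n + 1) :=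
  prod_range_succ _ _

lemma IsPrimitiveRoot.qInt_ne_zero {q : ℂ} {ℓ k : ℕ} (hq : IsPrimitiveRoot q ℓ) (hk : k ≠ 0)
    (hkℓ : k < ℓ) : qInt q k ≠ 0 := by
  intro h
  have hgeom : qInt q k * (q - 1) = q ^ k - 1 := geom_sum_mul q k
  rw [h, zero_mul, eq_comm, sub_eq_zero] at hgeom
  exact hq.pow_ne_one_of_pos_of_lt hk hkℓ hgeom

lemma IsPrimitiveRoot.qFact_ne_zero {q : ℂ} {ℓ n : ℕ} (hq : IsPrimitiveRoot q ℓ) (hn : n < ℓ) :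
    qFact q n ≠ 0 :=
  prod_ne_zero_iff.2 fun j hj => hq.qInt_ne_zero j.succ_ne_zero (by rw [mem_range] at hj; omega)

/-- `qBinom q i j` is the Gaussian binomial coefficient `[i + j choose i]_q`. -/
def qBinom {R : Type*} [CommSemiring R] (q : R) : ℕ → ℕ → R
  | 0, _ => 1
  | _ + 1, 0 => 1
  | i + 1, j + 1 => q ^ (j + 1) * qBinom q i (j + 1) + qBinom q (i + 1) j

section qBinom

variable {R : Type*} [CommSemiring R] (q : R)

@[simp] lemma qBinom_zero_left (j : ℕ) : qBinom q 0 j = 1 := by rw [qBinom]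

@[simp] lemma qBinom_zero_right (i : ℕ) : qBinom q i 0 = 1 := by cases i <;> rw [qBinom]

lemma qBinom_succ_succ (i j : ℕ) :
    qBinom q (i + 1) (j + 1) = q ^ (j + 1) * qBinom q i (j + 1) + qBinom q (i + 1) j := by
  rw [qBinom]

end qBinom

lemma qBinom_mul_qFact_mul_qFact (q : ℂ) :
    ∀ i j, qBinom q i j * (qFact q i * qFact q j) = qFact q (i + j)
  | 0, j => by simp [qFact_zero]
  | i + 1, 0 => by simp [qFact_zero]
  | i + 1, j + 1 => by
    have hleft := qBinom_mul_qFact_mul_qFact q i (j + 1)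
    have hright := qBinom_mul_qFact_mul_qFact q (i + 1) j
    rw [qFact_succ q j, show i + (j + 1) = i + j + 1 by ring] at hleft
    rw [qFact_succ q i, show i + 1 + j = i + j + 1 by ring] at hright
    rw [qFact_succ q i, qFact_succ q j, show i + 1 + (j + 1) = (i + j + 1) + 1 by ring,
      qFact_succ _ (i + j + 1), show i + j + 1 + 1 = (j + 1) + (i + 1) by ring,
      qInt_add q (j + 1), qBinom_succ_succ]
    linear_combination (q ^ (j + 1) * qInt q (i + 1)) * hleft + qInt q (j + 1) * hright

def QCommute {R A : Type*} [CommSemiring R] [Semiring A] [Algebra R A] (q : R) (y z : A) : Prop :=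
  z * y = q • (y * z)

namespace QCommute

variable {R A : Type*} [CommSemiring R] [Semiring A] [Algebra R A] {q : R} {y z : A}

lemma pow_right (h : QCommute q y z) (m : ℕ) : QCommute (q ^ m) y (z ^ m) := by
  induction m with
  | zero => simp [QCommute]
  | succ m ih =>
    calc z ^ (m + 1) * y = z ^ m * (q • (y * z)) := by rw [pow_succ, mul_assoc, h]
    _ = q • ((z ^ m * y) * z) := by rw [mul_smul_comm, mul_assoc]
    _ = q ^ (m + 1) • (y * z ^ (m + 1)) := by
      rw [ih, smul_mul_assoc, smul_smul, mul_assoc, ← pow_succ, ← pow_succ']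

lemma pow_mul_pow_mul_add (h : QCommute q y z) (a b : ℕ) :
    y ^ a * z ^ b * (y + z) = q ^ b • (y ^ (a + 1) * z ^ b) + y ^ a * z ^ (b + 1) := by
  rw [mul_add, mul_assoc, h.pow_right b, mul_smul_comm, ← mul_assoc, ← pow_succ, mul_assoc,
    ← pow_succ]

theorem add_pow (h : QCommute q y z) (n : ℕ) :
    (y + z) ^ n = ∑ p ∈ antidiagonal n, qBinom q p.1 p.2 • (y ^ p.1 * z ^ p.2) := by
  induction n with
  | zero => simp
  | succ n ih =>
    rcases n with _ | n
    · simp [Nat.antidiagonal_succ, add_comm]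
    rw [pow_succ, ih, sum_mul]
    simp only [smul_mul_assoc, h.pow_mul_pow_mul_add, smul_add, smul_smul, sum_add_distrib]
    -- peel off the boundary terms `y ^ (n + 2)`, `z ^ (n + 2)`; what remains on both sides is a
    -- sum over `antidiagonal n` matched term by term by the Pascal recursion of `qBinom`
    rw [Nat.sum_antidiagonal_succ', Nat.sum_antidiagonal_succ (n := n + 1),
      Nat.sum_antidiagonal_succ, Nat.sum_antidiagonal_succ']
    simp only [qBinom_succ_succ, add_smul, sum_add_distrib, qBinom_zero_left, qBinom_zero_right,
      pow_zero, mul_one, one_mul, one_smul, mul_comm (qBinom q _ _)]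
    abel

end QCommute

lemma qFact_inv_mul_qBinom {q : ℂ} {i j : ℕ} (h : qFact q (i + j) ≠ 0) :
    (qFact q (i + j))⁻¹ * qBinom q i j = (qFact q i)⁻¹ * (qFact q j)⁻¹ := by
  rw [← qBinom_mul_qFact_mul_qFact] at h ⊢
  obtain ⟨hb, hi, hj⟩ : qBinom q i j ≠ 0 ∧ qFact q i ≠ 0 ∧ qFact q j ≠ 0 := by
    simpa only [mul_ne_zero_iff] using h
  field_simp

lemma QCommute.qFact_inv_smul_add_pow {A : Type*} [Semiring A] [Algebra ℂ A] {q : ℂ} {y z : A}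
    (h : QCommute q y z) {n : ℕ} (hn : qFact q n ≠ 0) :
    (qFact q n)⁻¹ • (y + z) ^ n =
      ∑ k ∈ range (n + 1), ((qFact q k)⁻¹ * (qFact q (n - k))⁻¹) • (y ^ k * z ^ (n - k)) := by
  rw [h.add_pow, smul_sum, Nat.sum_antidiagonal_eq_sum_range_succ
    (fun i j => (qFact q n)⁻¹ • qBinom q i j • (y ^ i * z ^ j))]
  refine sum_congr rfl fun k hk => ?_
  have hkn : k + (n - k) = n := by rw [mem_range] at hk; omega
  have hcoeff := qFact_inv_mul_qBinom (hkn ▸ hn)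
  rw [hkn] at hcoeff
  rw [smul_smul, hcoeff]

lemma pow_mul_pow_eq_zero_of_le {M : Type*} [MonoidWithZero M] {y z : M} {ℓ m k : ℕ}
    (hzero : ∀ i ≤ ℓ, y ^ i * z ^ (ℓ - i) = 0) (hm : m ≤ ℓ) (hk : ℓ ≤ m + k) :
    y ^ m * z ^ k = 0 := by
  obtain ⟨d, rfl⟩ : ∃ d, k = ℓ - m + d := ⟨k - (ℓ - m), by omega⟩
  rw [pow_add, ← mul_assoc, hzero m hm, zero_mul]

section qExp

variable {A : Type*} [Ring A] [Algebra ℂ A] {q : ℂ} {ℓ : ℕ} {y z : A}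

lemma QCommute.qExp_add_eq_sum (hq : IsPrimitiveRoot q ℓ) (h : QCommute q y z) :
    qExp q ℓ (y + z) =
      ∑ m ∈ range ℓ, ∑ k ∈ range (ℓ - m), ((qFact q m)⁻¹ * (qFact q k)⁻¹) • (y ^ m * z ^ k) := by
  rw [qExp, sum_congr rfl fun n hn =>
    h.qFact_inv_smul_add_pow (hq.qFact_ne_zero (mem_range.1 hn))]
  exact sum_range_diag_flip ℓ fun m k => ((qFact q m)⁻¹ * (qFact q k)⁻¹) • (y ^ m * z ^ k)

lemma qExp_mul_qExp_eq_sum (hzero : ∀ i ≤ ℓ, y ^ i * z ^ (ℓ - i) = 0) :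
    qExp q ℓ y * qExp q ℓ z =
      ∑ m ∈ range ℓ, ∑ k ∈ range (ℓ - m), ((qFact q m)⁻¹ * (qFact q k)⁻¹) • (y ^ m * z ^ k) := by
  rw [qExp, qExp, sum_mul_sum]
  refine sum_congr rfl fun m hm => ?_
  rw [mem_range] at hm
  simp only [smul_mul_smul_comm]
  refine (sum_subset (range_mono (Nat.sub_le ℓ m)) fun k _ hk => ?_).symm
  rw [mem_range, not_lt] at hk
  rw [pow_mul_pow_eq_zero_of_le hzero hm.le (by omega), smul_zero]

end qExp

theorem qExp_add_general {A : Type*} [Ring A] [Algebra ℂ A] {q : ℂ} {ℓ : ℕ}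
    (hq : IsPrimitiveRoot q ℓ) (y z : A) (hcomm : z * y = q • (y * z))
    (hzero : ∀ i ≤ ℓ, y ^ i * z ^ (ℓ - i) = 0) :
    qExp q ℓ (y + z) = qExp q ℓ y * qExp q ℓ z := by
  rw [QCommute.qExp_add_eq_sum hq hcomm, qExp_mul_qExp_eq_sum hzero]

/-- Lemma 3.1: if `q` is a primitive ℓ-th root of unity (ℓ ≥ 2) and `y, z` are elements
of a ℂ-algebra with `z y = q y z` and `y^i z^{ℓ-i} = 0` for `0 ≤ i ≤ ℓ`, then
`exp_q(y + z) = exp_q(y) exp_q(z)`. -/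
theorem qExp_add {A : Type*} [Ring A] [Algebra ℂ A] {q : ℂ} {ℓ : ℕ} (hℓ : 2 ≤ ℓ)
    (hq : IsPrimitiveRoot q ℓ) (y z : A) (hcomm : z * y = q • (y * z))
    (hzero : ∀ i ≤ ℓ, y ^ i * z ^ (ℓ - i) = 0) :
    qExp q ℓ (y + z) = qExp q ℓ y * qExp q ℓ z :=
  qExp_add_general hq y z hcomm hzero
end

section
/- Let A be an algebra over a field with multiplication m, let σ be an algebra automorphism of A, let D₁ be a σ,1-skew derivation (D₁(ab) = D₁(a)σ(b) + aD₁(b)) and D₂ a 1,σ-skew derivation (D₂(ab) = D₂(a)b + σ(a)D₂(b)). Then μ₁ = m ∘ (D₁ ⊗ D₂), i.e. μ₁(a ⊗ b) = D₁(a)D₂(b), is a Hochschild two-cocycle: μ₁(a⊗b)c + μ₁(ab⊗c) = μ₁(a⊗bc) + aμ₁(b⊗c) for all a,b,c ∈ A. -/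
-- The twist `σ b` coming from `D₁ (a * b)` cancels against the one coming from `D₂ (b * c)`.
theorem mul_comp_skewDerivations_cocycle {A : Type*} [NonUnitalRing A] (σ D₁ D₂ : A → A)
    (a b c : A) (hD₁ : D₁ (a * b) = D₁ a * σ b + a * D₁ b)
    (hD₂ : D₂ (b * c) = D₂ b * c + σ b * D₂ c) :
    (D₁ a * D₂ b) * c + D₁ (a * b) * D₂ c = D₁ a * D₂ (b * c) + a * (D₁ b * D₂ c) := by
  rw [hD₁, hD₂]
  simp only [add_mul, mul_add, mul_assoc]
  abel

/-- Lemma 3.3: if `σ` is an automorphism of an algebra `A` over a field `k`,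
`D₁` is a `σ,1`-skew derivation and `D₂` is a `1,σ`-skew derivation, then
`μ₁(a ⊗ b) = D₁(a) D₂(b)` is a Hochschild two-cocycle. -/
theorem skewDerivations_give_hochschild_two_cocycle
    {k A : Type*} [Field k] [Ring A] [Algebra k A]
    (σ : A ≃ₐ[k] A) (D₁ D₂ : A →ₗ[k] A)
    (hD₁ : ∀ a b : A, D₁ (a * b) = D₁ a * σ b + a * D₁ b)
    (hD₂ : ∀ a b : A, D₂ (a * b) = D₂ a * b + σ a * D₂ b) :
    ∀ a b c : A,
      (D₁ a * D₂ b) * c + D₁ (a * b) * D₂ c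
        = D₁ a * D₂ (b * c) + a * (D₁ b * D₂ c) :=
  fun a b c => mul_comp_skewDerivations_cocycle σ D₁ D₂ a b c (hD₁ a b) (hD₂ b c)
end

section
/- Let A be a ℂ-algebra on which the Hopf algebra H_q acts making A an H_q-module algebra, and let F = exp_q(t D₁ ⊗ D₂) be a universal deformation formula based on H_q (satisfying (Δ⊗id)(F)(F⊗1) = (id⊗Δ)(F)(1⊗F) and (ε⊗id)(F) = 1⊗1 = (id⊗ε)(F)). Then the product a * b = (m ∘ F)(a ⊗ b) on A[[t]] is associative with unit 1_A. -/
open TensorProduct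

/-- The operator on `A ⊗ A` induced by an element of `B ⊗ B` via an action
`act : B → End(A)`. -/
noncomputable def actTwo {B A : Type*} [Ring B] [Algebra ℂ B] [Ring A] [Algebra ℂ A]
    (act : B →ₗ[ℂ] Module.End ℂ A) :
    B ⊗[ℂ] B →ₗ[ℂ] (A ⊗[ℂ] A →ₗ[ℂ] A ⊗[ℂ] A) :=
  TensorProduct.homTensorHomMap (RingHom.id ℂ) A A A A ∘ₗ TensorProduct.map act act

/-- `μ_w(a,b) = m(w·(a ⊗ b))` for `w ∈ B ⊗ B`. -/
noncomputable def muF {B A : Type*} [Ring B] [Algebra ℂ B] [Ring A] [Algebra ℂ A]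
    (act : B →ₗ[ℂ] Module.End ℂ A) (w : B ⊗[ℂ] B) (a b : A) : A :=
  LinearMap.mul' ℂ A ((actTwo act w) (a ⊗ₜ b))

/-- The star product `a * b = (m ∘ F)(a ⊗ b)` on `A[[t]]`, where
`F = Σ tⁿ F n ∈ (B ⊗ B)[[t]]`, extended ℂ[[t]]-bilinearly. -/
noncomputable def starMul {B A : Type*} [Ring B] [Algebra ℂ B] [Ring A] [Algebra ℂ A]
    (act : B →ₗ[ℂ] Module.End ℂ A) (F : ℕ → B ⊗[ℂ] B)
    (f g : PowerSeries A) : PowerSeries A :=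
  PowerSeries.mk fun n => ∑ p ∈ Finset.HasAntidiagonal.antidiagonal n, ∑ r ∈ Finset.HasAntidiagonal.antidiagonal p.2,
    muF act (F p.1) (PowerSeries.coeff (R := A) r.1 f) (PowerSeries.coeff (R := A) r.2 g)

/-!
Write `μ_w(a, b) = m(w · (a ⊗ b))`. The module-algebra axiom gives
`x · μ_v(a, b) = μ_{Δ(x) v}(a, b)`, so `μ_w(μ_v(a, b), c)` and `μ_w(a, μ_v(b, c))` are the
evaluations on `a ⊗ b ⊗ c` of `(Δ ⊗ id)(w) (v ⊗ 1)` and `(id ⊗ Δ)(w) (1 ⊗ v)`; the evaluation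
`x ⊗ y ⊗ z ↦ (x·a)(y·b)(z·c)` is compatible with the associator because `A` is associative.
Taking the coefficient of `tᵏ`, the cocycle identity for `F` therefore gives
`∑_{i+j=k} μ_{Fᵢ}(μ_{Fⱼ}(a, b), c) = ∑_{i+j=k} μ_{Fᵢ}(a, μ_{Fⱼ}(b, c))`, which is exactly what
makes the `t`-bilinear extension of the family `(μ_{Fᵢ})ᵢ` associative. The counit identities say
`μ_{Fᵢ}(a, 1) = μ_{Fᵢ}(1, a) = δᵢ₀ a`, so `1` is a unit.
-/

open Finset

section FormalStar

section Reindexing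

variable {M : Type*} [AddCommMonoid M]

theorem sum_antidiagonal_antidiagonal_assoc (n : ℕ) (f : ℕ → ℕ → ℕ → M) :
    ∑ p ∈ antidiagonal n, ∑ q ∈ antidiagonal p.1, f q.1 q.2 p.2
      = ∑ p ∈ antidiagonal n, ∑ q ∈ antidiagonal p.2, f p.1 q.1 q.2 := by
  simp only [sum_sigma']
  apply sum_nbij' (fun ⟨(_, c), (a, b)⟩ => ⟨(a, b + c), (b, c)⟩)
    (fun ⟨(a, _), (b, c)⟩ => ⟨(a + b, c), (a, b)⟩) <;> aesop (add simp [add_assoc])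

-- Both sides sum `T i j a b c` over `i + j + a + b + c = n`; on the right `(i, j)` is innermost.
theorem sum_antidiagonal_nested_left (n : ℕ) (T : ℕ → ℕ → ℕ → ℕ → ℕ → M) :
    ∑ p ∈ antidiagonal n, ∑ r ∈ antidiagonal p.2, ∑ q ∈ antidiagonal r.1,
        ∑ s ∈ antidiagonal q.2, T p.1 q.1 s.1 s.2 r.2
      = ∑ x ∈ antidiagonal n, ∑ y ∈ antidiagonal x.2, ∑ s ∈ antidiagonal y.1,
        ∑ v ∈ antidiagonal x.1, T v.1 v.2 s.1 s.2 y.2 := by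
  simp only [sum_sigma']
  apply sum_nbij'
    (fun ⟨(i, _), (_, c), (j, _), (a, b)⟩ =>
      ⟨(i + j, a + b + c), (a + b, c), (a, b), (i, j)⟩)
    (fun ⟨_, (_, c), (a, b), (i, j)⟩ =>
      ⟨(i, j + a + b + c), (j + a + b, c), (j, a + b), (a, b)⟩)
    <;> aesop (add simp [add_assoc])

theorem sum_antidiagonal_nested_right (n : ℕ) (T : ℕ → ℕ → ℕ → ℕ → ℕ → M) :
    ∑ p ∈ antidiagonal n, ∑ r ∈ antidiagonal p.2, ∑ q ∈ antidiagonal r.2,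
        ∑ s ∈ antidiagonal q.2, T p.1 q.1 r.1 s.1 s.2
      = ∑ x ∈ antidiagonal n, ∑ y ∈ antidiagonal x.2, ∑ s ∈ antidiagonal y.2,
        ∑ v ∈ antidiagonal x.1, T v.1 v.2 y.1 s.1 s.2 := by
  simp only [sum_sigma']
  apply sum_nbij'
    (fun ⟨(i, _), (a, _), (j, _), (b, c)⟩ =>
      ⟨(i + j, a + b + c), (a, b + c), (b, c), (i, j)⟩)
    (fun ⟨_, (a, _), (b, c), (i, j)⟩ =>
      ⟨(i, a + j + b + c), (a, j + b + c), (j, b + c), (b, c)⟩)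
    <;> aesop (add simp [add_assoc, add_left_comm])

theorem sum_antidiagonal_ite_fst (n : ℕ) (φ : ℕ × ℕ → M) :
    ∑ r ∈ antidiagonal n, (if r.1 = 0 then φ r else 0) = φ (0, n) := by
  refine (sum_eq_single_of_mem (0, n) (by simp) fun r hr hne => if_neg fun h => hne ?_).trans
    (if_pos rfl)
  rw [HasAntidiagonal.mem_antidiagonal] at hr
  ext <;> simp <;> omega

theorem sum_antidiagonal_ite_snd (n : ℕ) (φ : ℕ × ℕ → M) :
    ∑ r ∈ antidiagonal n, (if r.2 = 0 then φ r else 0) = φ (n, 0) := by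
  refine (sum_eq_single_of_mem (n, 0) (by simp) fun r hr hne => if_neg fun h => hne ?_).trans
    (if_pos rfl)
  rw [HasAntidiagonal.mem_antidiagonal] at hr
  ext <;> simp <;> omega

end Reindexing

variable {S : Type*} [Semiring S] (μ : ℕ → S →+ S →+ S)

/-- The `t`-bilinear extension of `∑ᵢ tⁱ μᵢ`. -/
noncomputable def formalStar (f g : PowerSeries S) : PowerSeries S :=
  PowerSeries.mk fun n => ∑ p ∈ antidiagonal n, ∑ r ∈ antidiagonal p.2,
    μ p.1 (PowerSeries.coeff r.1 f) (PowerSeries.coeff r.2 g)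

theorem formalStar_assoc
    (hμ : ∀ k a b c, ∑ v ∈ antidiagonal k, μ v.1 (μ v.2 a b) c
      = ∑ v ∈ antidiagonal k, μ v.1 a (μ v.2 b c))
    (f g h : PowerSeries S) :
    formalStar μ (formalStar μ f g) h = formalStar μ f (formalStar μ g h) := by
  ext n
  simp only [formalStar, PowerSeries.coeff_mk, map_sum, AddMonoidHom.finsetSum_apply]
  rw [sum_antidiagonal_nested_left n fun i j a b c =>
      μ i (μ j (PowerSeries.coeff a f) (PowerSeries.coeff b g)) (PowerSeries.coeff c h),
    sum_antidiagonal_nested_right n fun i j a b c =>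
      μ i (PowerSeries.coeff a f) (μ j (PowerSeries.coeff b g) (PowerSeries.coeff c h))]
  simp only [hμ]
  exact sum_congr rfl fun x _ => sum_antidiagonal_antidiagonal_assoc x.2 fun a b c =>
    ∑ v ∈ antidiagonal x.1,
      μ v.1 (PowerSeries.coeff a f) (μ v.2 (PowerSeries.coeff b g) (PowerSeries.coeff c h))

theorem formalStar_one (hμ : ∀ i a, μ i a 1 = if i = 0 then a else 0) (f : PowerSeries S) :
    formalStar μ f 1 = f := by
  ext n
  simp only [formalStar, PowerSeries.coeff_mk, PowerSeries.coeff_one, apply_ite (μ _ _),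
    map_zero, hμ, sum_antidiagonal_ite_snd, sum_antidiagonal_ite_fst]

theorem one_formalStar (hμ : ∀ i b, μ i 1 b = if i = 0 then b else 0) (f : PowerSeries S) :
    formalStar μ 1 f = f := by
  ext n
  simp only [formalStar, PowerSeries.coeff_mk, PowerSeries.coeff_one, apply_ite (μ _),
    apply_ite (DFunLike.coe : (S →+ S) → S → S), ite_apply, AddMonoidHom.zero_apply, map_zero,
    hμ, sum_antidiagonal_ite_fst]

end FormalStar

section ModuleAlgebra

variable {B A : Type*} [Ring B] [Algebra ℂ B] [Ring A] [Algebra ℂ A]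
  (act : B →ₗ[ℂ] Module.End ℂ A)

@[simp]
theorem muF_tmul (x y : B) (a b : A) : muF act (x ⊗ₜ y) a b = act x a * act y b := by
  simp [muF, actTwo]

noncomputable def muFHom (w : B ⊗[ℂ] B) : A →+ A →+ A :=
  LinearMap.toAddMonoidHom'.comp
    ((TensorProduct.mk ℂ A A).compr₂ (LinearMap.mul' ℂ A ∘ₗ actTwo act w)).toAddMonoidHom

theorem muFHom_apply (w : B ⊗[ℂ] B) (a b : A) : muFHom act w a b = muF act w a b := rfl

theorem starMul_eq_formalStar (F : ℕ → B ⊗[ℂ] B) :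
    starMul act F = formalStar fun i => muFHom act (F i) := rfl

noncomputable def muFAt (a b : A) : B ⊗[ℂ] B →ₗ[ℂ] A :=
  LinearMap.mul' ℂ A ∘ₗ (actTwo act).flip (a ⊗ₜ b)

@[simp]
theorem muF_zero (a b : A) : muF act 0 a b = 0 := map_zero (muFAt act a b)

@[simp]
theorem muF_add (w w' : B ⊗[ℂ] B) (a b : A) :
    muF act (w + w') a b = muF act w a b + muF act w' a b :=
  map_add (muFAt act a b) w w'

/-- Evaluation of `B ⊗ B ⊗ B` on `a ⊗ b ⊗ c`: `x ⊗ y ⊗ z ↦ (x·a)(y·b)(z·c)`. -/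
noncomputable def tripleMul (a b c : A) : B ⊗[ℂ] (B ⊗[ℂ] B) →ₗ[ℂ] A :=
  LinearMap.mul' ℂ A ∘ₗ TensorProduct.map (act.flip a) (muFAt act b c)

theorem tripleMul_tmul (a b c : A) (x : B) (w : B ⊗[ℂ] B) :
    tripleMul act a b c (x ⊗ₜ w) = act x a * muF act w b c := rfl

theorem tripleMul_assoc_tmul (a b c : A) (w : B ⊗[ℂ] B) (z : B) :
    tripleMul act a b c (Algebra.TensorProduct.assoc ℂ ℂ ℂ B B B (w ⊗ₜ z))
      = muF act w a b * act z c := by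
  induction w using TensorProduct.induction_on with
  | zero => simp
  | tmul x y => simp [Algebra.TensorProduct.assoc_tmul, tripleMul_tmul, mul_assoc]
  | add w w' hw hw' => simp [add_tmul, hw, hw', add_mul]

end ModuleAlgebra

section Bialgebra

variable {B A : Type*} [Ring B] [Bialgebra ℂ B] [Ring A] [Algebra ℂ A]
  {act : B →ₗ[ℂ] Module.End ℂ A}

theorem muF_one_right
    (hmodalg_one : ∀ h : B, act h (1 : A) = Coalgebra.counit (R := ℂ) h • (1 : A))
    (w : B ⊗[ℂ] B) (a : A) :
    muF act w a 1 = act (TensorProduct.rid ℂ B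
      (TensorProduct.map LinearMap.id (Coalgebra.counit (R := ℂ)) w)) a := by
  induction w using TensorProduct.induction_on with
  | zero => simp
  | tmul x y => simp [hmodalg_one]
  | add w w' hw hw' => simp [hw, hw']

theorem muF_one_left
    (hmodalg_one : ∀ h : B, act h (1 : A) = Coalgebra.counit (R := ℂ) h • (1 : A))
    (w : B ⊗[ℂ] B) (b : A) :
    muF act w 1 b = act (TensorProduct.lid ℂ B
      (TensorProduct.map (Coalgebra.counit (R := ℂ)) LinearMap.id w)) b := by
  induction w using TensorProduct.induction_on with
  | zero => simp
  | tmul x y => simp [hmodalg_one]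
  | add w w' hw hw' => simp [hw, hw']

variable (hact_mul : ∀ (g h : B) (a : A), act (g * h) a = act g (act h a))
  (hmodalg_mul : ∀ (h : B) (a b : A), act h (a * b) = muF act (Coalgebra.comul h) a b)
include hact_mul hmodalg_mul

theorem act_muF (x : B) (v : B ⊗[ℂ] B) (a b : A) :
    act x (muF act v a b) = muF act (Coalgebra.comul x * v) a b := by
  induction v using TensorProduct.induction_on with
  | zero => simp
  | add v v' hv hv' => simp [mul_add, hv, hv']
  | tmul u u' =>
    rw [muF_tmul, hmodalg_mul]
    induction Coalgebra.comul (R := ℂ) x using TensorProduct.induction_on with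
    | zero => simp
    | add d d' hd hd' => simp [add_mul, hd, hd']
    | tmul d d' => simp [hact_mul]

theorem muF_muF_left (w v : B ⊗[ℂ] B) (a b c : A) :
    muF act w (muF act v a b) c
      = tripleMul act a b c (Algebra.TensorProduct.assoc ℂ ℂ ℂ B B B
          (TensorProduct.map (Coalgebra.comul (R := ℂ)) LinearMap.id w * (v ⊗ₜ (1 : B)))) := by
  induction w using TensorProduct.induction_on with
  | zero => simp
  | add w w' hw hw' => simp [add_mul, hw, hw']
  | tmul x y => simp [act_muF hact_mul hmodalg_mul, tripleMul_assoc_tmul]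

theorem muF_muF_right (w v : B ⊗[ℂ] B) (a b c : A) :
    muF act w a (muF act v b c)
      = tripleMul act a b c
          (TensorProduct.map LinearMap.id (Coalgebra.comul (R := ℂ)) w * ((1 : B) ⊗ₜ v)) := by
  induction w using TensorProduct.induction_on with
  | zero => simp
  | add w w' hw hw' => simp [add_mul, hw, hw']
  | tmul x y => simp [act_muF hact_mul hmodalg_mul, tripleMul_tmul]

theorem sum_muF_muF_of_cocycle (F : ℕ → B ⊗[ℂ] B)
    (hbraid : ∀ n : ℕ,
      ∑ p ∈ antidiagonal n, Algebra.TensorProduct.assoc ℂ ℂ ℂ B B B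
          (TensorProduct.map (Coalgebra.comul (R := ℂ)) LinearMap.id (F p.1) * (F p.2 ⊗ₜ (1 : B)))
        = ∑ p ∈ antidiagonal n,
          TensorProduct.map LinearMap.id (Coalgebra.comul (R := ℂ)) (F p.1) * ((1 : B) ⊗ₜ F p.2))
    (k : ℕ) (a b c : A) :
    ∑ v ∈ antidiagonal k, muF act (F v.1) (muF act (F v.2) a b) c
      = ∑ v ∈ antidiagonal k, muF act (F v.1) a (muF act (F v.2) b c) := by
  simp only [muF_muF_left hact_mul hmodalg_mul, muF_muF_right hact_mul hmodalg_mul, ← map_sum,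
    hbraid]

end Bialgebra

theorem udf_gives_formal_deformation_general {B A : Type*} [Ring B]
    [Bialgebra ℂ B] [Ring A] [Algebra ℂ A]
    (act : B →ₗ[ℂ] Module.End ℂ A)
    (hact_one : ∀ a : A, act 1 a = a)
    (hact_mul : ∀ (g h : B) (a : A), act (g * h) a = act g (act h a))
    (hmodalg_mul : ∀ (h : B) (a b : A),
      act h (a * b) = muF act (Coalgebra.comul h) a b)
    (hmodalg_one : ∀ h : B, act h (1 : A) = Coalgebra.counit (R := ℂ) h • (1 : A))
    (F : ℕ → B ⊗[ℂ] B)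
    (hcounit_left : ∀ n : ℕ,
      (TensorProduct.lid ℂ B)
          ((TensorProduct.map (Coalgebra.counit (R := ℂ)) LinearMap.id) (F n))
        = if n = 0 then 1 else 0)
    (hcounit_right : ∀ n : ℕ,
      (TensorProduct.rid ℂ B)
          ((TensorProduct.map LinearMap.id (Coalgebra.counit (R := ℂ))) (F n))
        = if n = 0 then 1 else 0)
    (hbraid : ∀ n : ℕ,
      ∑ p ∈ Finset.HasAntidiagonal.antidiagonal n,
          (Algebra.TensorProduct.assoc ℂ ℂ ℂ B B B)
            ((TensorProduct.map (Coalgebra.comul (R := ℂ)) LinearMap.id) (F p.1)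
              * (F p.2 ⊗ₜ (1 : B)))
        = ∑ p ∈ Finset.HasAntidiagonal.antidiagonal n,
          (TensorProduct.map LinearMap.id (Coalgebra.comul (R := ℂ))) (F p.1)
            * ((1 : B) ⊗ₜ F p.2)) :
    (∀ f g h : PowerSeries A,
        starMul act F (starMul act F f g) h = starMul act F f (starMul act F g h)) ∧
      (∀ f : PowerSeries A, starMul act F f 1 = f) ∧
      (∀ f : PowerSeries A, starMul act F 1 f = f) := by
  have hunit_right : ∀ i (a : A), muFHom act (F i) a 1 = if i = 0 then a else 0 := fun i a => by
    rw [muFHom_apply, muF_one_right hmodalg_one, hcounit_right]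
    split_ifs <;> simp [hact_one]
  have hunit_left : ∀ i (b : A), muFHom act (F i) 1 b = if i = 0 then b else 0 := fun i b => by
    rw [muFHom_apply, muF_one_left hmodalg_one, hcounit_left]
    split_ifs <;> simp [hact_one]
  rw [starMul_eq_formalStar]
  exact ⟨formalStar_assoc _ (sum_muF_muF_of_cocycle hact_mul hmodalg_mul F hbraid),
    formalStar_one _ hunit_right, one_formalStar _ hunit_left⟩

/-- Giaquinto–Zhang: if `A` is a left `B`-module algebra for a bialgebra `B` and
`F = Σ tⁿ F n` is a universal deformation formula based on `B` (i.e.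
`(ε⊗id)(F) = 1⊗1 = (id⊗ε)(F)` and `[(Δ⊗id)(F)](F⊗1) = [(id⊗Δ)(F)](1⊗F)`),
then the star product `a * b = (m ∘ F)(a ⊗ b)` on `A[[t]]` is associative with
unit `1_A`. -/
theorem udf_gives_formal_deformation {B A : Type*} [Ring B]
    [Bialgebra ℂ B] [Ring A] [Algebra ℂ A]
    (act : B →ₗ[ℂ] Module.End ℂ A)
    (hact_one : ∀ a : A, act 1 a = a)
    (hact_mul : ∀ (g h : B) (a : A), act (g * h) a = act g (act h a))
    (hmodalg_mul : ∀ (h : B) (a b : A),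
      act h (a * b) = muF act (Coalgebra.comul h) a b)
    (hmodalg_one : ∀ h : B, act h (1 : A) = Coalgebra.counit (R := ℂ) h • (1 : A))
    (F : ℕ → B ⊗[ℂ] B)
    (hF0 : F 0 = 1)
    (hcounit_left : ∀ n : ℕ,
      (TensorProduct.lid ℂ B)
          ((TensorProduct.map (Coalgebra.counit (R := ℂ)) LinearMap.id) (F n))
        = if n = 0 then 1 else 0)
    (hcounit_right : ∀ n : ℕ,
      (TensorProduct.rid ℂ B)
          ((TensorProduct.map LinearMap.id (Coalgebra.counit (R := ℂ))) (F n))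
        = if n = 0 then 1 else 0)
    (hbraid : ∀ n : ℕ,
      ∑ p ∈ Finset.HasAntidiagonal.antidiagonal n,
          (Algebra.TensorProduct.assoc ℂ ℂ ℂ B B B)
            ((TensorProduct.map (Coalgebra.comul (R := ℂ)) LinearMap.id) (F p.1)
              * (F p.2 ⊗ₜ (1 : B)))
        = ∑ p ∈ Finset.HasAntidiagonal.antidiagonal n,
          (TensorProduct.map LinearMap.id (Coalgebra.comul (R := ℂ))) (F p.1)
            * ((1 : B) ⊗ₜ F p.2)) :
    (∀ f g h : PowerSeries A,
        starMul act F (starMul act F f g) h = starMul act F f (starMul act F g h)) ∧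
      (∀ f : PowerSeries A, starMul act F f 1 = f) ∧
      (∀ f : PowerSeries A, starMul act F 1 f = f) :=
  udf_gives_formal_deformation_general act hact_one hact_mul hmodalg_mul hmodalg_one F hcounit_left
    hcounit_right hbraid
end

section
/- For q = -1, let A = ℂ⟨x, g | gx = -xg, x² = 0, g² = 1⟩ (Sweedler's 4-dimensional Hopf algebra as an algebra), and define operators on A, an automorphism σ and skew derivations D₁, D₂, as in the Taft algebra example, in the idempotent presentation (indices mod 2): D_i(s_j) = 0, D₁(γ_i) = s_{i+1}, D₂(γ_i) = s_i, σ(γ_i) = -γ_{i+1}, σ(s_i) = s_{i+1}. Then these operators satisfy the relations D₁D₂ = D₂D₁, -σD_i = D_iσ, D_i² = 0 on A, and the skew-Leibniz rules D₁(ab) = D₁(a)σ(b) + aD₁(b), D₂(ab) = D₂(a)b + σ(a)D₂(b), making A an H_{-1}-module algebra. -/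
open FreeAlgebra

/-- The relations of the Taft algebra `A` on generators
`0 ↦ s₀, 1 ↦ s₁, 2 ↦ γ₀, 3 ↦ γ₁` (indices mod 2). -/
inductive TaftRel : FreeAlgebra ℂ (Fin 4) → FreeAlgebra ℂ (Fin 4) → Prop
  | sum : TaftRel (ι ℂ (0 : Fin 4) + ι ℂ (1 : Fin 4)) 1
  | idem0 : TaftRel (ι ℂ (0 : Fin 4) * ι ℂ (0 : Fin 4)) (ι ℂ (0 : Fin 4))
  | idem1 : TaftRel (ι ℂ (1 : Fin 4) * ι ℂ (1 : Fin 4)) (ι ℂ (1 : Fin 4))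
  | orth0 : TaftRel (ι ℂ (0 : Fin 4) * ι ℂ (1 : Fin 4)) 0
  | orth1 : TaftRel (ι ℂ (1 : Fin 4) * ι ℂ (0 : Fin 4)) 0
  | nil0 : TaftRel (ι ℂ (2 : Fin 4) * ι ℂ (2 : Fin 4)) 0
  | nil1 : TaftRel (ι ℂ (3 : Fin 4) * ι ℂ (3 : Fin 4)) 0
  | gg0 : TaftRel (ι ℂ (2 : Fin 4) * ι ℂ (3 : Fin 4)) 0
  | gg1 : TaftRel (ι ℂ (3 : Fin 4) * ι ℂ (2 : Fin 4)) 0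
  | sg00 : TaftRel (ι ℂ (0 : Fin 4) * ι ℂ (2 : Fin 4)) 0
  | sg11 : TaftRel (ι ℂ (1 : Fin 4) * ι ℂ (3 : Fin 4)) 0
  | sg10 : TaftRel (ι ℂ (1 : Fin 4) * ι ℂ (2 : Fin 4)) (ι ℂ (2 : Fin 4))
  | sg01 : TaftRel (ι ℂ (0 : Fin 4) * ι ℂ (3 : Fin 4)) (ι ℂ (3 : Fin 4))
  | gs00 : TaftRel (ι ℂ (2 : Fin 4) * ι ℂ (0 : Fin 4)) (ι ℂ (2 : Fin 4))
  | gs11 : TaftRel (ι ℂ (3 : Fin 4) * ι ℂ (1 : Fin 4)) (ι ℂ (3 : Fin 4))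
  | gs01 : TaftRel (ι ℂ (2 : Fin 4) * ι ℂ (1 : Fin 4)) 0
  | gs10 : TaftRel (ι ℂ (3 : Fin 4) * ι ℂ (0 : Fin 4)) 0

/-- The Taft algebra `A` (Sweedler's four-dimensional algebra in its
idempotent/quiver presentation). -/
abbrev TaftAlg := RingQuot TaftRel

noncomputable def ts0 : TaftAlg := RingQuot.mkAlgHom ℂ TaftRel (ι ℂ (0 : Fin 4))
noncomputable def ts1 : TaftAlg := RingQuot.mkAlgHom ℂ TaftRel (ι ℂ (1 : Fin 4))
noncomputable def tγ0 : TaftAlg := RingQuot.mkAlgHom ℂ TaftRel (ι ℂ (2 : Fin 4))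
noncomputable def tγ1 : TaftAlg := RingQuot.mkAlgHom ℂ TaftRel (ι ℂ (3 : Fin 4))

namespace TaftProof

lemma rel (x y : FreeAlgebra ℂ (Fin 4)) (h : TaftRel x y) :
    RingQuot.mkAlgHom ℂ TaftRel x = RingQuot.mkAlgHom ℂ TaftRel y :=
  RingQuot.mkAlgHom_rel ℂ h

lemma rsum : ts0 + ts1 = 1 := by
  simpa [ts0, ts1] using rel _ _ TaftRel.sum
lemma r00 : ts0 * ts0 = ts0 := by
  simpa [ts0] using rel _ _ TaftRel.idem0
lemma r11 : ts1 * ts1 = ts1 := by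
  simpa [ts1] using rel _ _ TaftRel.idem1
lemma r01 : ts0 * ts1 = 0 := by
  simpa [ts0, ts1] using rel _ _ TaftRel.orth0
lemma r10 : ts1 * ts0 = 0 := by
  simpa [ts0, ts1] using rel _ _ TaftRel.orth1
lemma rg00 : tγ0 * tγ0 = 0 := by
  simpa [tγ0] using rel _ _ TaftRel.nil0
lemma rg11 : tγ1 * tγ1 = 0 := by
  simpa [tγ1] using rel _ _ TaftRel.nil1
lemma rg01 : tγ0 * tγ1 = 0 := by
  simpa [tγ0, tγ1] using rel _ _ TaftRel.gg0
lemma rg10 : tγ1 * tγ0 = 0 := by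
  simpa [tγ0, tγ1] using rel _ _ TaftRel.gg1
lemma rsg00 : ts0 * tγ0 = 0 := by
  simpa [ts0, tγ0] using rel _ _ TaftRel.sg00
lemma rsg11 : ts1 * tγ1 = 0 := by
  simpa [ts1, tγ1] using rel _ _ TaftRel.sg11
lemma rsg10 : ts1 * tγ0 = tγ0 := by
  simpa [ts1, tγ0] using rel _ _ TaftRel.sg10
lemma rsg01 : ts0 * tγ1 = tγ1 := by
  simpa [ts0, tγ1] using rel _ _ TaftRel.sg01
lemma rgs00 : tγ0 * ts0 = tγ0 := by
  simpa [ts0, tγ0] using rel _ _ TaftRel.gs00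
lemma rgs11 : tγ1 * ts1 = tγ1 := by
  simpa [ts1, tγ1] using rel _ _ TaftRel.gs11
lemma rgs01 : tγ0 * ts1 = 0 := by
  simpa [ts1, tγ0] using rel _ _ TaftRel.gs01
lemma rgs10 : tγ1 * ts0 = 0 := by
  simpa [ts0, tγ1] using rel _ _ TaftRel.gs10

end TaftProof
namespace TaftProof

lemma tneg_mul (a b : TaftAlg) : -a * b = -(a * b) := neg_mul a b
lemma tmul_neg (a b : TaftAlg) : a * -b = -(a * b) := mul_neg a b
lemma tneg_neg (a : TaftAlg) : - -a = a := neg_neg a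
lemma tneg_zero : (-0 : TaftAlg) = 0 := neg_zero

noncomputable def sigmaHom : TaftAlg →ₐ[ℂ] TaftAlg :=
  RingQuot.liftAlgHom ℂ ⟨FreeAlgebra.lift ℂ ![ts1, ts0, -tγ1, -tγ0], by
    intro x y h
    induction h <;>
      simp [FreeAlgebra.lift_ι_apply, tneg_mul, tmul_neg, tneg_neg, tneg_zero,
        rsum, r00, r11, r01, r10, rg00, rg11, rg01, rg10,
        rsg00, rsg11, rsg10, rsg01, rgs00, rgs11, rgs01, rgs10, add_comm]⟩

lemma sigma_s0 : sigmaHom ts0 = ts1 := by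
  simp [sigmaHom, ts0, FreeAlgebra.lift_ι_apply]
lemma sigma_s1 : sigmaHom ts1 = ts0 := by
  simp [sigmaHom, ts1, FreeAlgebra.lift_ι_apply]
lemma sigma_g0 : sigmaHom tγ0 = -tγ1 := by
  simp [sigmaHom, tγ0, FreeAlgebra.lift_ι_apply]
lemma sigma_g1 : sigmaHom tγ1 = -tγ0 := by
  simp [sigmaHom, tγ1, FreeAlgebra.lift_ι_apply]

lemma sigma_invol : sigmaHom.comp sigmaHom = AlgHom.id ℂ TaftAlg := by
  apply RingQuot.ringQuot_ext'
  apply FreeAlgebra.hom_ext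
  funext i
  simp only [Function.comp_apply, AlgHom.coe_comp, AlgHom.coe_id, id_eq]
  fin_cases i
  · show sigmaHom (sigmaHom ts0) = ts0
    rw [sigma_s0, sigma_s1]
  · show sigmaHom (sigmaHom ts1) = ts1
    rw [sigma_s1, sigma_s0]
  · show sigmaHom (sigmaHom tγ0) = tγ0
    rw [sigma_g0, map_neg, sigma_g1, neg_neg]
  · show sigmaHom (sigmaHom tγ1) = tγ1
    rw [sigma_g1, map_neg, sigma_g0, neg_neg]

end TaftProof
namespace TaftProof

noncomputable def Phi1 : TaftAlg →ₐ[ℂ] Matrix (Fin 2) (Fin 2) TaftAlg :=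
  RingQuot.liftAlgHom ℂ ⟨FreeAlgebra.lift ℂ
    ![!![ts0, 0; 0, ts1], !![ts1, 0; 0, ts0], !![tγ0, ts1; 0, -tγ1], !![tγ1, ts0; 0, -tγ0]], by
    intro x y h
    induction h <;>
      · simp only [map_mul, map_add, map_one, map_zero, FreeAlgebra.lift_ι_apply,
          Matrix.cons_val_zero, Matrix.cons_val_one, Matrix.head_cons,
          Matrix.cons_val', Matrix.cons_val_fin_one, Matrix.empty_val',
          Matrix.head_fin_const]
        ext i j
        fin_cases i <;> fin_cases j <;>
          simp [Matrix.mul_apply, Fin.sum_univ_two, Matrix.one_apply,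
            tneg_mul, tmul_neg, tneg_neg, tneg_zero, rsum, add_comm,
            r00, r11, r01, r10, rg00, rg11, rg01, rg10,
            rsg00, rsg11, rsg10, rsg01, rgs00, rgs11, rgs01, rgs10]⟩

noncomputable def Phi2 : TaftAlg →ₐ[ℂ] Matrix (Fin 2) (Fin 2) TaftAlg :=
  RingQuot.liftAlgHom ℂ ⟨FreeAlgebra.lift ℂ
    ![!![ts1, 0; 0, ts0], !![ts0, 0; 0, ts1], !![-tγ1, ts0; 0, tγ0], !![-tγ0, ts1; 0, tγ1]], by
    intro x y h
    induction h <;>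
      · simp only [map_mul, map_add, map_one, map_zero, FreeAlgebra.lift_ι_apply,
          Matrix.cons_val_zero, Matrix.cons_val_one, Matrix.head_cons,
          Matrix.cons_val', Matrix.cons_val_fin_one, Matrix.empty_val',
          Matrix.head_fin_const]
        ext i j
        fin_cases i <;> fin_cases j <;>
          simp [Matrix.mul_apply, Fin.sum_univ_two, Matrix.one_apply,
            tneg_mul, tmul_neg, tneg_neg, tneg_zero, rsum, add_comm,
            r00, r11, r01, r10, rg00, rg11, rg01, rg10,
            rsg00, rsg11, rsg10, rsg01, rgs00, rgs11, rgs01, rgs10]⟩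

end TaftProof
namespace TaftProof

lemma taft_ind {P : TaftAlg → Prop}
    (h0 : ∀ c : ℂ, P (algebraMap ℂ TaftAlg c))
    (hs0 : P ts0) (hs1 : P ts1) (hg0 : P tγ0) (hg1 : P tγ1)
    (hadd : ∀ a b, P a → P b → P (a + b))
    (hmul : ∀ a b, P a → P b → P (a * b)) (a : TaftAlg) : P a := by
  obtain ⟨x, rfl⟩ := RingQuot.mkAlgHom_surjective ℂ TaftRel a
  induction x using FreeAlgebra.induction with
  | grade0 c => rw [AlgHom.commutes]; exact h0 c
  | grade1 i =>
    fin_cases i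
    · exact hs0
    · exact hs1
    · exact hg0
    · exact hg1
  | mul a b ha hb => rw [map_mul]; exact hmul _ _ ha hb
  | add a b ha hb => rw [map_add]; exact hadd _ _ ha hb

noncomputable def D1 : TaftAlg →ₗ[ℂ] TaftAlg where
  toFun a := Phi1 a 0 1
  map_add' a b := by simp [map_add]
  map_smul' c a := by simp [map_smul]

noncomputable def D2 : TaftAlg →ₗ[ℂ] TaftAlg where
  toFun a := Phi2 a 0 1
  map_add' a b := by simp [map_add]
  map_smul' c a := by simp [map_smul]

lemma Phi1_s0 : Phi1 ts0 = !![ts0, 0; 0, ts1] := by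
  simp [Phi1, ts0, FreeAlgebra.lift_ι_apply]
lemma Phi1_s1 : Phi1 ts1 = !![ts1, 0; 0, ts0] := by
  simp [Phi1, ts1, FreeAlgebra.lift_ι_apply]
lemma Phi1_g0 : Phi1 tγ0 = !![tγ0, ts1; 0, -tγ1] := by
  simp [Phi1, tγ0, FreeAlgebra.lift_ι_apply]
lemma Phi1_g1 : Phi1 tγ1 = !![tγ1, ts0; 0, -tγ0] := by
  simp [Phi1, tγ1, FreeAlgebra.lift_ι_apply]
lemma Phi2_s0 : Phi2 ts0 = !![ts1, 0; 0, ts0] := by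
  simp [Phi2, ts0, FreeAlgebra.lift_ι_apply]
lemma Phi2_s1 : Phi2 ts1 = !![ts0, 0; 0, ts1] := by
  simp [Phi2, ts1, FreeAlgebra.lift_ι_apply]
lemma Phi2_g0 : Phi2 tγ0 = !![-tγ1, ts0; 0, tγ0] := by
  simp [Phi2, tγ0, FreeAlgebra.lift_ι_apply]
lemma Phi2_g1 : Phi2 tγ1 = !![-tγ0, ts1; 0, tγ1] := by
  simp [Phi2, tγ1, FreeAlgebra.lift_ι_apply]

lemma Phi1_struct (a : TaftAlg) :
    Phi1 a 0 0 = a ∧ Phi1 a 1 0 = 0 ∧ Phi1 a 1 1 = sigmaHom a := by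
  induction a using taft_ind with
  | h0 c => simp [Matrix.algebraMap_matrix_apply]
  | hs0 => simp [Phi1_s0, sigma_s0]
  | hs1 => simp [Phi1_s1, sigma_s1]
  | hg0 => simp [Phi1_g0, sigma_g0]
  | hg1 => simp [Phi1_g1, sigma_g1]
  | hadd a b ha hb =>
    simp [map_add, ha.1, ha.2.1, ha.2.2, hb.1, hb.2.1, hb.2.2]
  | hmul a b ha hb =>
    simp [map_mul, Matrix.mul_apply, Fin.sum_univ_two,
      ha.1, ha.2.1, ha.2.2, hb.1, hb.2.1, hb.2.2]

lemma Phi2_struct (a : TaftAlg) :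
    Phi2 a 0 0 = sigmaHom a ∧ Phi2 a 1 0 = 0 ∧ Phi2 a 1 1 = a := by
  induction a using taft_ind with
  | h0 c => simp [Matrix.algebraMap_matrix_apply]
  | hs0 => simp [Phi2_s0, sigma_s0]
  | hs1 => simp [Phi2_s1, sigma_s1]
  | hg0 => simp [Phi2_g0, sigma_g0]
  | hg1 => simp [Phi2_g1, sigma_g1]
  | hadd a b ha hb =>
    simp [map_add, ha.1, ha.2.1, ha.2.2, hb.1, hb.2.1, hb.2.2]
  | hmul a b ha hb =>
    simp [map_mul, Matrix.mul_apply, Fin.sum_univ_two,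
      ha.1, ha.2.1, ha.2.2, hb.1, hb.2.1, hb.2.2]

lemma leib1 (a b : TaftAlg) : D1 (a * b) = D1 a * sigmaHom b + a * D1 b := by
  show Phi1 (a * b) 0 1 = _
  rw [map_mul, Matrix.mul_apply, Fin.sum_univ_two, (Phi1_struct a).1, (Phi1_struct b).2.2]
  show a * D1 b + D1 a * sigmaHom b = _
  rw [add_comm]

lemma leib2 (a b : TaftAlg) : D2 (a * b) = D2 a * b + sigmaHom a * D2 b := by
  show Phi2 (a * b) 0 1 = _
  rw [map_mul, Matrix.mul_apply, Fin.sum_univ_two, (Phi2_struct a).1, (Phi2_struct b).2.2]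
  show sigmaHom a * D2 b + D2 a * b = _
  rw [add_comm]

lemma D1_s0 : D1 ts0 = 0 := by show Phi1 ts0 0 1 = 0; simp [Phi1_s0]
lemma D1_s1 : D1 ts1 = 0 := by show Phi1 ts1 0 1 = 0; simp [Phi1_s1]
lemma D1_g0 : D1 tγ0 = ts1 := by show Phi1 tγ0 0 1 = ts1; simp [Phi1_g0]
lemma D1_g1 : D1 tγ1 = ts0 := by show Phi1 tγ1 0 1 = ts0; simp [Phi1_g1]
lemma D2_s0 : D2 ts0 = 0 := by show Phi2 ts0 0 1 = 0; simp [Phi2_s0]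
lemma D2_s1 : D2 ts1 = 0 := by show Phi2 ts1 0 1 = 0; simp [Phi2_s1]
lemma D2_g0 : D2 tγ0 = ts0 := by show Phi2 tγ0 0 1 = ts0; simp [Phi2_g0]
lemma D2_g1 : D2 tγ1 = ts1 := by show Phi2 tγ1 0 1 = ts1; simp [Phi2_g1]

lemma D1_algebraMap (c : ℂ) : D1 (algebraMap ℂ TaftAlg c) = 0 := by
  show Phi1 (algebraMap ℂ TaftAlg c) 0 1 = 0
  simp [Matrix.algebraMap_matrix_apply]

lemma D2_algebraMap (c : ℂ) : D2 (algebraMap ℂ TaftAlg c) = 0 := by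
  show Phi2 (algebraMap ℂ TaftAlg c) 0 1 = 0
  simp [Matrix.algebraMap_matrix_apply]

end TaftProof
namespace TaftProof

lemma tneg_add (a b : TaftAlg) : -(a + b) = -a + -b := neg_add a b

lemma sigmaD1 (a : TaftAlg) : D1 (sigmaHom a) = -sigmaHom (D1 a) := by
  induction a using taft_ind with
  | h0 c => simp [D1_algebraMap, tneg_zero]
  | hs0 => simp [sigma_s0, D1_s0, D1_s1, tneg_zero]
  | hs1 => simp [sigma_s1, D1_s0, D1_s1, tneg_zero]
  | hg0 => simp [sigma_g0, D1_g0, D1_g1, sigma_s1, map_neg]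
  | hg1 => simp [sigma_g1, D1_g0, D1_g1, sigma_s0, map_neg]
  | hadd a b ha hb => simp [map_add, ha, hb, tneg_add, add_comm]
  | hmul a b ha hb =>
    rw [map_mul, leib1, ha, hb, leib1, map_add, map_mul, map_mul]
    simp [tneg_mul, tmul_neg, tneg_add, add_comm]

lemma sigmaD2 (a : TaftAlg) : D2 (sigmaHom a) = -sigmaHom (D2 a) := by
  induction a using taft_ind with
  | h0 c => simp [D2_algebraMap, tneg_zero]
  | hs0 => simp [sigma_s0, D2_s0, D2_s1, tneg_zero]
  | hs1 => simp [sigma_s1, D2_s0, D2_s1, tneg_zero]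
  | hg0 => simp [sigma_g0, D2_g0, D2_g1, sigma_s0, map_neg]
  | hg1 => simp [sigma_g1, D2_g0, D2_g1, sigma_s1, map_neg]
  | hadd a b ha hb => simp [map_add, ha, hb, tneg_add, add_comm]
  | hmul a b ha hb =>
    rw [map_mul, leib2, ha, hb, leib2, map_add, map_mul, map_mul]
    simp [tneg_mul, tmul_neg, tneg_add, add_comm]

lemma nilD1 (a : TaftAlg) : D1 (D1 a) = 0 := by
  induction a using taft_ind with
  | h0 c => simp [D1_algebraMap]
  | hs0 => simp [D1_s0]
  | hs1 => simp [D1_s1]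
  | hg0 => simp [D1_g0, D1_s1]
  | hg1 => simp [D1_g1, D1_s0]
  | hadd a b ha hb => simp [map_add, ha, hb]
  | hmul a b ha hb =>
    rw [leib1, map_add, leib1, leib1, ha, hb, sigmaD1 b]
    simp [tmul_neg]
  
lemma nilD2 (a : TaftAlg) : D2 (D2 a) = 0 := by
  induction a using taft_ind with
  | h0 c => simp [D2_algebraMap]
  | hs0 => simp [D2_s0]
  | hs1 => simp [D2_s1]
  | hg0 => simp [D2_g0, D2_s0]
  | hg1 => simp [D2_g1, D2_s1]
  | hadd a b ha hb => simp [map_add, ha, hb]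
  | hmul a b ha hb =>
    rw [leib2, map_add, leib2, leib2, ha, hb, sigmaD2 a]
    simp [tneg_mul]

lemma commD (a : TaftAlg) : D1 (D2 a) = D2 (D1 a) := by
  induction a using taft_ind with
  | h0 c => simp [D1_algebraMap, D2_algebraMap]
  | hs0 => simp [D1_s0, D2_s0]
  | hs1 => simp [D1_s1, D2_s1]
  | hg0 => simp [D1_g0, D2_g0, D1_s0, D2_s1]
  | hg1 => simp [D1_g1, D2_g1, D1_s1, D2_s0]
  | hadd a b ha hb => simp [map_add, ha, hb]
  | hmul a b ha hb =>
    rw [leib2, map_add, leib1, leib1, leib1, map_add, leib2, leib2,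
      ha, hb, sigmaD1 a, sigmaD2 b]
    simp only [tneg_mul, tmul_neg]
    abel

end TaftProof

open TaftProof in
/-- There exist an automorphism `σ` and skew derivations `D₁, D₂` of the Taft
algebra `A`, with the prescribed values on the generators
(`σ(γᵢ) = -γᵢ₊₁`, `σ(sᵢ) = sᵢ₊₁`, `D₁(γᵢ) = sᵢ₊₁`, `D₂(γᵢ) = sᵢ`, `Dᵢ(sⱼ) = 0`,
indices mod 2), satisfying the relations of `H₋₁`
(`D₁D₂ = D₂D₁`, `-σDᵢ = Dᵢσ`, `Dᵢ² = 0`) and the skew-Leibniz rules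
`D₁(ab) = D₁(a)σ(b) + aD₁(b)`, `D₂(ab) = D₂(a)b + σ(a)D₂(b)`; thus `A` is an
`H₋₁`-module algebra. -/
theorem taft_Hminus1_module_algebra :
    ∃ (σ : TaftAlg ≃ₐ[ℂ] TaftAlg) (D₁ D₂ : TaftAlg →ₗ[ℂ] TaftAlg),
      σ tγ0 = -tγ1 ∧ σ tγ1 = -tγ0 ∧ σ ts0 = ts1 ∧ σ ts1 = ts0 ∧
      D₁ tγ0 = ts1 ∧ D₁ tγ1 = ts0 ∧ D₂ tγ0 = ts0 ∧ D₂ tγ1 = ts1 ∧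
      D₁ ts0 = 0 ∧ D₁ ts1 = 0 ∧ D₂ ts0 = 0 ∧ D₂ ts1 = 0 ∧
      (∀ a, D₁ (D₂ a) = D₂ (D₁ a)) ∧
      (∀ a, D₁ (σ a) = -σ (D₁ a)) ∧
      (∀ a, D₂ (σ a) = -σ (D₂ a)) ∧
      (∀ a, D₁ (D₁ a) = 0) ∧ (∀ a, D₂ (D₂ a) = 0) ∧
      (∀ a b, D₁ (a * b) = D₁ a * σ b + a * D₁ b) ∧
      (∀ a b, D₂ (a * b) = D₂ a * b + σ a * D₂ b) :=
  ⟨AlgEquiv.ofAlgHom sigmaHom sigmaHom sigma_invol sigma_invol, D1, D2,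
    sigma_g0, sigma_g1, sigma_s0, sigma_s1,
    D1_g0, D1_g1, D2_g0, D2_g1, D1_s0, D1_s1, D2_s0, D2_s1,
    commD, sigmaD1, sigmaD2, nilD1, nilD2, leib1, leib2⟩
end
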